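/- The rgraph Ω with vertices 'true' and 'false', distinguished loops at each, an extra loop at 'true', an edge from 'true' to 'false', and an edge from 'false' to 'true', is a subobject classifier for the category of reflexive directed graphs. -/

import Mathlib

/-- A reflexive directed graph. -/
structure RGraph where
  V : Type
  E : Type
  src : E → V
  tgt : E → V
  loop : V → E
  loop_src : ∀ v, src (loop v) = v
  loop_tgt : ∀ v, tgt (loop v) = v

/-- A morphism of reflexive directed graphs. -/
@[ext]
structure RGraphHom (G H : RGraph) where
  onV : G.V → H.V
  onE : G.E → H.E
  map_src : ∀ e, H.src (onE e) = onV (G.src e)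
  map_tgt : ∀ e, H.tgt (onE e) = onV (G.tgt e)
  map_loop : ∀ v, onE (G.loop v) = H.loop (onV v)

/-- The identity rgraph morphism. -/
def RGraphHom.id (G : RGraph) : RGraphHom G G :=
  ⟨fun v => v, fun e => e, fun _ => rfl, fun _ => rfl, fun _ => rfl⟩

/-- Composition of rgraph morphisms (diagrammatic order). -/
def RGraphHom.comp {G H K : RGraph} (f : RGraphHom G H) (g : RGraphHom H K) :
    RGraphHom G K :=
  ⟨fun v => g.onV (f.onV v), fun e => g.onE (f.onE e),
    fun e => by show K.src (g.onE (f.onE e)) = _; rw [g.map_src, f.map_src],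
    fun e => by show K.tgt (g.onE (f.onE e)) = _; rw [g.map_tgt, f.map_tgt],
    fun v => by show g.onE (f.onE (G.loop v)) = _; rw [f.map_loop, g.map_loop]⟩

instance : CategoryTheory.Category RGraph where
  Hom := RGraphHom
  id := RGraphHom.id
  comp := RGraphHom.comp
  id_comp := by intros; rfl
  comp_id := by intros; rfl
  assoc := by intros; rfl
/-- The terminal rgraph: one vertex and only its distinguished loop. -/
def OneR : RGraph :=
  ⟨Unit, Unit, fun _ => (), fun _ => (), fun _ => (), fun _ => rfl, fun _ => rfl⟩

/-- The walking-edge rgraph `E`: vertices `s = false` and `t = true`, their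
distinguished loops (`Sum.inl`), and one extra edge `Sum.inr ()` from `s` to `t`. -/
def WalkingEdge : RGraph :=
  ⟨Bool, Bool ⊕ Unit,
    fun e => match e with | .inl b => b | .inr _ => false,
    fun e => match e with | .inl b => b | .inr _ => true,
    fun b => .inl b, fun _ => rfl, fun _ => rfl⟩

/-- The binary product of two rgraphs, formed componentwise. -/
def RGraph.prod (G H : RGraph) : RGraph :=
  ⟨G.V × H.V, G.E × H.E,
    fun e => (G.src e.1, H.src e.2), fun e => (G.tgt e.1, H.tgt e.2),
    fun v => (G.loop v.1, H.loop v.2),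
    fun v => by simp [G.loop_src, H.loop_src],
    fun v => by simp [G.loop_tgt, H.loop_tgt]⟩

/-- The edges of the truth-value rgraph: the distinguished loops at `true` and
`false`, an extra loop at `true`, an edge from `true` to `false`, and an edge
from `false` to `true`. -/
inductive OmegaE | ltrue | lfalse | extraTrue | tf | ft

/-- The truth-value rgraph `Ω`. -/
def Omega : RGraph :=
  ⟨Bool, OmegaE,
    fun e => match e with
      | .ltrue => true | .lfalse => false | .extraTrue => true
      | .tf => true | .ft => false,
    fun e => match e with
      | .ltrue => true | .lfalse => false | .extraTrue => true
      | .tf => false | .ft => true,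
    fun b => match b with | true => .ltrue | false => .lfalse,
    fun b => by cases b <;> rfl, fun b => by cases b <;> rfl⟩

/-- The morphism `true : 1 → Ω` picking out the vertex `true`. -/
def trueHom : RGraphHom OneR Omega :=
  ⟨fun _ => true, fun _ => .ltrue, fun _ => rfl, fun _ => rfl, fun _ => rfl⟩

/-- The unique morphism from an rgraph to the terminal rgraph. -/
def bangHom (G : RGraph) : RGraphHom G OneR :=
  ⟨fun _ => (), fun _ => (), fun _ => rfl, fun _ => rfl, fun _ => rfl⟩

/-! A morphism `χ : G → Ω` is determined by the edges it sends to `ltrue`: a vertex goes to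
`true` exactly when its loop goes to `ltrue`, and any other edge of `Ω` is determined by its
endpoints. A monomorphism is injective on edges (test it against the walking edge), hence on
vertices (through loops), and the square over `true` is then a pullback exactly when the edges
sent to `ltrue` form the image of `m`. That image is realised by sending an edge outside it to
the edge other than `ltrue` between the images of its endpoints. -/

open CategoryTheory

namespace RGraphHom

variable {G H : RGraph}

lemma eq_bangHom (f : G ⟶ OneR) : f = bangHom G := rfl

lemma src_mem_range_onV {m : G ⟶ H} {e : H.E} (he : e ∈ Set.range m.onE) :
    H.src e ∈ Set.range m.onV := by
  obtain ⟨f, rfl⟩ := he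
  exact ⟨G.src f, (m.map_src f).symm⟩

lemma tgt_mem_range_onV {m : G ⟶ H} {e : H.E} (he : e ∈ Set.range m.onE) :
    H.tgt e ∈ Set.range m.onV := by
  obtain ⟨f, rfl⟩ := he
  exact ⟨G.tgt f, (m.map_tgt f).symm⟩

lemma loop_mem_range_onE_iff (m : G ⟶ H) (v : H.V) :
    H.loop v ∈ Set.range m.onE ↔ v ∈ Set.range m.onV := by
  refine ⟨fun hv => ?_, ?_⟩
  · simpa only [H.loop_src] using src_mem_range_onV hv
  · rintro ⟨w, rfl⟩
    exact ⟨G.loop w, m.map_loop w⟩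

lemma injective_onV_of_injective_onE (f : G ⟶ H) (hf : Function.Injective f.onE) :
    Function.Injective f.onV := by
  intro a b hab
  have hloop : G.loop a = G.loop b := hf (by rw [f.map_loop, f.map_loop, hab])
  rw [← G.loop_src a, hloop, G.loop_src]

end RGraphHom

namespace RGraph

def edgeHom (G : RGraph) (e : G.E) : WalkingEdge ⟶ G where
  onV b := cond (b : Bool) (G.tgt e) (G.src e)
  onE
    | .inl b => G.loop (cond (b : Bool) (G.tgt e) (G.src e))
    | .inr _ => e
  map_src
    | .inl _ => G.loop_src _
    | .inr _ => rfl
  map_tgt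
    | .inl _ => G.loop_tgt _
    | .inr _ => rfl
  map_loop _ := rfl

lemma edgeHom_comp {S G : RGraph} (m : S ⟶ G) (e : S.E) :
    S.edgeHom e ≫ m = G.edgeHom (m.onE e) := by
  have hV : (S.edgeHom e ≫ m).onV = (G.edgeHom (m.onE e)).onV := by
    funext b
    cases b
    · exact (m.map_src e).symm
    · exact (m.map_tgt e).symm
  refine RGraphHom.ext hV (funext fun x => ?_)
  rcases x with b | _
  · exact (m.map_loop _).trans (congrArg G.loop (congrFun hV b))
  · rfl

end RGraph

lemma RGraphHom.injective_onE_of_mono {S G : RGraph} (m : S ⟶ G) [Mono m] :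
    Function.Injective m.onE := by
  intro e f h
  have hef : S.edgeHom e = S.edgeHom f :=
    (cancel_mono m).mp (by rw [RGraph.edgeHom_comp, RGraph.edgeHom_comp, h])
  exact congrFun (congrArg RGraphHom.onE hef) (.inr ())

namespace Omega

/-- Between any two vertices of `Ω` there is exactly one edge other than `ltrue`. -/
def nonTrueEdge : Omega.V → Omega.V → Omega.E
  | true, true => .extraTrue
  | true, false => .tf
  | false, true => .ft
  | false, false => .lfalse

lemma src_nonTrueEdge (a b : Omega.V) : Omega.src (nonTrueEdge a b) = a := by
  cases a <;> cases b <;> rfl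

lemma tgt_nonTrueEdge (a b : Omega.V) : Omega.tgt (nonTrueEdge a b) = b := by
  cases a <;> cases b <;> rfl

lemma nonTrueEdge_ne_ltrue (a b : Omega.V) : nonTrueEdge a b ≠ .ltrue := by
  cases a <;> cases b <;> nofun

lemma eq_nonTrueEdge {x : Omega.E} (hx : x ≠ .ltrue) :
    x = nonTrueEdge (Omega.src x) (Omega.tgt x) := by
  cases x <;> first | exact absurd rfl hx | rfl

lemma loop_eq_ltrue_iff (b : Omega.V) : Omega.loop b = .ltrue ↔ b = true := by
  cases b <;> simp [Omega]

variable {G : RGraph}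

lemma onV_eq_true_iff (χ : G ⟶ Omega) (v : G.V) :
    χ.onV v = true ↔ χ.onE (G.loop v) = .ltrue := by
  rw [χ.map_loop, loop_eq_ltrue_iff]

lemma onE_loop_src_eq_ltrue {χ : G ⟶ Omega} {e : G.E} (he : χ.onE e = .ltrue) :
    χ.onE (G.loop (G.src e)) = .ltrue := by
  rw [← onV_eq_true_iff, ← χ.map_src, he]
  rfl

lemma onE_loop_tgt_eq_ltrue {χ : G ⟶ Omega} {e : G.E} (he : χ.onE e = .ltrue) :
    χ.onE (G.loop (G.tgt e)) = .ltrue := by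
  rw [← onV_eq_true_iff, ← χ.map_tgt, he]
  rfl

lemma hom_ext {χ χ' : G ⟶ Omega} (h : ∀ e, χ.onE e = .ltrue ↔ χ'.onE e = .ltrue) :
    χ = χ' := by
  have hV' : ∀ v, χ.onV v = true ↔ χ'.onV v = true := fun v => by
    rw [onV_eq_true_iff, onV_eq_true_iff, h]
  have hV : χ.onV = χ'.onV := funext fun v => Bool.eq_iff_iff.mpr (hV' v)
  refine RGraphHom.ext hV (funext fun e => ?_)
  by_cases he : χ.onE e = .ltrue
  · rw [he, (h e).mp he]
  · rw [eq_nonTrueEdge he, eq_nonTrueEdge (mt (h e).mpr he), χ.map_src, χ.map_tgt,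
      χ'.map_src, χ'.map_tgt, hV]

lemma bangHom_comp_trueHom_eq_iff {T : RGraph} (f : T ⟶ Omega) :
    bangHom T ≫ trueHom = f ↔ ∀ e, f.onE e = .ltrue := by
  refine ⟨fun h e => (congrFun (congrArg RGraphHom.onE h) e).symm, fun h => ?_⟩
  refine RGraphHom.ext (funext fun v => ?_) (funext fun e => (h e).symm)
  exact ((onV_eq_true_iff f v).mpr (h _)).symm

end Omega

section Classifier

variable {S G : RGraph} (m : S ⟶ G)

noncomputable def RGraphHom.liftOfRange (hm : Function.Injective m.onE) {T : RGraph}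
    (f : T ⟶ G) (hf : ∀ e, f.onE e ∈ Set.range m.onE) : T ⟶ S :=
  have hlift : ∀ e, m.onE (Classical.choose (hf e)) = f.onE e :=
    fun e => Classical.choose_spec (hf e)
  have hliftV : ∀ v, m.onV (S.src (Classical.choose (hf (T.loop v)))) = f.onV v := fun v => by
    rw [← m.map_src, hlift, f.map_src, T.loop_src]
  have hmV := m.injective_onV_of_injective_onE hm
  { onV := fun v => S.src (Classical.choose (hf (T.loop v)))
    onE := fun e => Classical.choose (hf e)
    map_src := fun e => hmV (by rw [← m.map_src, hlift, hliftV, f.map_src])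
    map_tgt := fun e => hmV (by rw [← m.map_tgt, hlift, hliftV, f.map_tgt])
    map_loop := fun v => hm (by rw [hlift, m.map_loop, hliftV, f.map_loop]) }

lemma RGraphHom.liftOfRange_comp (hm : Function.Injective m.onE) {T : RGraph}
    (f : T ⟶ G) (hf : ∀ e, f.onE e ∈ Set.range m.onE) : m.liftOfRange hm f hf ≫ m = f := by
  refine RGraphHom.ext (funext fun v => ?_) (funext fun e => Classical.choose_spec (hf e))
  change m.onV (S.src (Classical.choose (hf (T.loop v)))) = f.onV v
  rw [← m.map_src, Classical.choose_spec (hf _), f.map_src, T.loop_src]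

lemma isPullback_of_forall_onE_eq_ltrue_iff [Mono m] {χ : G ⟶ Omega}
    (hχ : ∀ e, χ.onE e = .ltrue ↔ e ∈ Set.range m.onE) :
    IsPullback (bangHom S : S ⟶ OneR) m trueHom χ := by
  have hm := m.injective_onE_of_mono
  have hw : bangHom S ≫ trueHom = m ≫ χ :=
    (Omega.bangHom_comp_trueHom_eq_iff _).mpr fun e => (hχ _).mpr ⟨e, rfl⟩
  have hrange (s : Limits.PullbackCone trueHom χ) (e : s.pt.E) :
      s.snd.onE e ∈ Set.range m.onE := by
    refine (hχ _).mp ((Omega.bangHom_comp_trueHom_eq_iff (s.snd ≫ χ)).mp ?_ e)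
    rw [← s.condition, RGraphHom.eq_bangHom s.fst]
  refine IsPullback.of_isLimit' ⟨hw⟩ (Limits.PullbackCone.IsLimit.mk _
    (fun s => m.liftOfRange hm s.snd (hrange s)) (fun s => rfl)
    (fun s => m.liftOfRange_comp hm _ _) fun s l _ hl => (cancel_mono m).mp ?_)
  rw [hl, m.liftOfRange_comp]

lemma onE_eq_ltrue_iff_of_isPullback {χ : G ⟶ Omega}
    (h : IsPullback (bangHom S : S ⟶ OneR) m trueHom χ) (e : G.E) :
    χ.onE e = .ltrue ↔ e ∈ Set.range m.onE := by
  refine ⟨fun he => ?_, ?_⟩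
  · have hsq : bangHom WalkingEdge ≫ trueHom = G.edgeHom e ≫ χ :=
      (Omega.bangHom_comp_trueHom_eq_iff _).mpr fun
        | .inl false => Omega.onE_loop_src_eq_ltrue he
        | .inl true => Omega.onE_loop_tgt_eq_ltrue he
        | .inr () => he
    exact ⟨(h.lift _ _ hsq).onE (.inr ()),
      congrFun (congrArg RGraphHom.onE (h.lift_snd _ _ hsq)) (.inr ())⟩
  · rintro ⟨f, rfl⟩
    exact (congrFun (congrArg RGraphHom.onE h.w) f).symm

lemma isPullback_trueHom_iff [Mono m] (χ : G ⟶ Omega) :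
    IsPullback (bangHom S : S ⟶ OneR) m trueHom χ ↔
      ∀ e, χ.onE e = .ltrue ↔ e ∈ Set.range m.onE :=
  ⟨onE_eq_ltrue_iff_of_isPullback m, isPullback_of_forall_onE_eq_ltrue_iff m⟩

open scoped Classical in
noncomputable def RGraphHom.charMap : G ⟶ Omega where
  onV v := decide (v ∈ Set.range m.onV)
  onE e :=
    if e ∈ Set.range m.onE then .ltrue
    else Omega.nonTrueEdge (decide (G.src e ∈ Set.range m.onV))
      (decide (G.tgt e ∈ Set.range m.onV))
  map_src e := by
    by_cases he : e ∈ Set.range m.onE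
    · simp only [he, ↓reduceIte, decide_eq_true (RGraphHom.src_mem_range_onV he)]
      rfl
    · simp only [he, ↓reduceIte]
      exact Omega.src_nonTrueEdge _ _
  map_tgt e := by
    by_cases he : e ∈ Set.range m.onE
    · simp only [he, ↓reduceIte, decide_eq_true (RGraphHom.tgt_mem_range_onV he)]
      rfl
    · simp only [he, ↓reduceIte]
      exact Omega.tgt_nonTrueEdge _ _
  map_loop v := by
    by_cases hv : v ∈ Set.range m.onV
    · simp only [(m.loop_mem_range_onE_iff v).mpr hv, ↓reduceIte, decide_eq_true hv]
      rfl
    · simp only [mt (m.loop_mem_range_onE_iff v).mp hv, ↓reduceIte, G.loop_src, G.loop_tgt,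
        decide_eq_false hv]
      rfl

lemma RGraphHom.charMap_onE_eq_ltrue_iff (e : G.E) :
    m.charMap.onE e = .ltrue ↔ e ∈ Set.range m.onE := by
  by_cases he : e ∈ Set.range m.onE
  · simp only [RGraphHom.charMap, he, ↓reduceIte, iff_true]
    rfl
  · simp only [RGraphHom.charMap, he, ↓reduceIte, iff_false]
    exact Omega.nonTrueEdge_ne_ltrue _ _

end Classifier

open CategoryTheory in
/-- The truth-value rgraph `Ω`, together with `true : 1 → Ω`, is a subobject
classifier for the category of reflexive directed graphs: every monomorphism
`m : S → G` is a pullback of `true` along a unique characteristic morphism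
`χ : G → Ω`. -/
theorem omega_is_subobject_classifier :
    ∀ (S G : RGraph) (m : S ⟶ G), Mono m →
      ∃! χ : G ⟶ Omega,
        IsPullback (bangHom S : S ⟶ OneR) m (trueHom : OneR ⟶ Omega) χ := by
  intro S G m _
  refine ⟨m.charMap, (isPullback_trueHom_iff m _).mpr m.charMap_onE_eq_ltrue_iff,
    fun χ hχ => Omega.hom_ext fun e => ?_⟩
  rw [(isPullback_trueHom_iff m χ).mp hχ, m.charMap_onE_eq_ltrue_iff]
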